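/- arXiv:2006.14771 — 3 statements merged into one kernel-verified Lean document; each statement's English description precedes it below -/
import Mathlib

section
/- Let K ⊆ H be nonempty closed convex and f, g : C → H weakly homogeneous with degrees δ₁ > 0 and δ₂ > 0 respectively. Suppose g⁻¹(K) := {x ∈ C : g(x) ∈ K} is unbounded. If δ₁ + δ₂ < 2, then f is not strongly monotone with respect to g on K. -/
/-!
Along any sequence `x → ∞` in `g⁻¹(K)`, weak homogeneity bounds `‖f x - f y‖` by `O(‖x‖^δ₁)` and
`‖g x - g y‖` by `O(‖x‖^δ₂)` (the homogeneous parts are bounded on the compact unit sphere of the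
cone), so `⟪f x - f y, g x - g y⟫ = O(‖x‖^(δ₁+δ₂)) = o(‖x‖²)`, while strong monotonicity forces
it to be at least `c ‖x - y‖² ≍ ‖x‖²`.
-/

open RealInnerProductSpace Filter Asymptotics Set

theorem isLittleO_rpow_rpow_atTop {a b : ℝ} (hab : a < b) :
    (fun x : ℝ => x ^ a) =o[atTop] fun x => x ^ b := by
  refine (isLittleO_iff_tendsto' ?_).2 ?_
  · filter_upwards [eventually_gt_atTop 0] with x hx h
    exact absurd h (Real.rpow_pos_of_pos hx b).ne'
  · refine (tendsto_rpow_neg_atTop (sub_pos.2 hab)).congr' ?_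
    filter_upwards [eventually_gt_atTop 0] with x hx
    rw [← Real.rpow_sub hx, neg_sub]

section

variable {E F : Type*} [NormedAddCommGroup E]

theorem isBigO_rpow_norm_of_homogeneous [NormedSpace ℝ E] [NormedAddCommGroup F]
    [NormedSpace ℝ F] [ProperSpace E] {C : Set E} (hC : IsClosed C) (hcone : ∀ x ∈ C, ∀ l : ℝ, 0 < l → l • x ∈ C) {δ : ℝ}
    {h : E → F} (hhom : ∀ x ∈ C, ∀ l : ℝ, 0 < l → h (l • x) = l ^ δ • h x)
    (hcont : ContinuousOn h C) :
    h =O[𝓟 (C \ {0})] fun x => ‖x‖ ^ δ := by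
  obtain ⟨A, hA⟩ := ((isCompact_sphere (0 : E) 1).inter_left hC).exists_bound_of_continuousOn
    (hcont.mono inter_subset_left)
  refine IsBigO.of_bound A (eventually_principal.2 fun x ⟨hxC, hx0⟩ => ?_)
  have hx : 0 < ‖x‖ := norm_pos_iff.2 hx0
  have hu : ‖x‖⁻¹ • x ∈ C ∩ Metric.sphere 0 1 :=
    ⟨hcone x hxC _ (inv_pos.2 hx), by simp [norm_smul, hx.ne']⟩
  have hxu : h x = ‖x‖ ^ δ • h (‖x‖⁻¹ • x) := by
    rw [← hhom _ hu.1 _ hx, smul_smul, mul_inv_cancel₀ hx.ne', one_smul]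
  rw [hxu, norm_smul, mul_comm]
  exact mul_le_mul_of_nonneg_right (hA _ hu) (norm_nonneg _)

theorem isBigO_sub_const_of_weaklyHomogeneous [NormedSpace ℝ E] [NormedAddCommGroup F]
    [NormedSpace ℝ F] [ProperSpace E] {C : Set E} (hC : IsClosed C)
    (hcone : ∀ x ∈ C, ∀ l : ℝ, 0 < l → l • x ∈ C) {l : Filter E} (hl : Tendsto norm l atTop)
    (hlC : l ≤ 𝓟 C) {δ : ℝ} (hδ : 0 < δ) {f fInf fbar : E → F} {p : F}
    (hdec : ∀ x ∈ C, f x = fInf x + fbar x + p)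
    (hhom : ∀ x ∈ C, ∀ l : ℝ, 0 < l → fInf (l • x) = l ^ δ • fInf x)
    (hcont : ContinuousOn fInf C)
    (hsmall : ∀ ε : ℝ, 0 < ε → ∃ M : ℝ, ∀ x ∈ C, M ≤ ‖x‖ → ‖fbar x‖ ≤ ε * ‖x‖ ^ δ) (v : F) :
    (fun x => f x - v) =O[l] fun x => ‖x‖ ^ δ := by
  have hlC' : ∀ᶠ x in l, x ∈ C := le_principal_iff.1 hlC
  have hInf : fInf =O[l] fun x => ‖x‖ ^ δ := by
    refine (isBigO_rpow_norm_of_homogeneous hC hcone hhom hcont).mono (le_principal_iff.2 ?_)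
    filter_upwards [hlC', hl.eventually_gt_atTop 0] with x hxC hx
    exact ⟨hxC, norm_pos_iff.1 hx⟩
  have hbar : fbar =o[l] fun x => ‖x‖ ^ δ := by
    refine isLittleO_iff.2 fun ε hε => ?_
    obtain ⟨M, hM⟩ := hsmall ε hε
    filter_upwards [hlC', hl.eventually_ge_atTop M] with x hxC hxM
    rw [Real.norm_of_nonneg (by positivity)]
    exact hM x hxC hxM
  have hconst : (fun _ => p - v) =O[l] fun x => ‖x‖ ^ δ :=
    ((isBigO_const_one ℝ _ _).trans_isLittleO ((isLittleO_one_left_iff ℝ).2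
      (tendsto_norm_atTop_atTop.comp ((tendsto_rpow_atTop hδ).comp hl)))).isBigO
  refine ((hInf.add hbar.isBigO).add hconst).congr' ?_ EventuallyEq.rfl
  filter_upwards [hlC'] with x hx
  rw [hdec x hx]
  abel

variable [NormedAddCommGroup F] [InnerProductSpace ℝ F] {l : Filter E}

theorem isLittleO_inner_sq_norm (hl : Tendsto norm l atTop) {u v : E → F} {δ₁ δ₂ : ℝ}
    (hu : u =O[l] fun x => ‖x‖ ^ δ₁) (hv : v =O[l] fun x => ‖x‖ ^ δ₂) (hδ : δ₁ + δ₂ < 2) :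
    (fun x => ⟪u x, v x⟫) =o[l] fun x => ‖x‖ ^ 2 := by
  have hinner : (fun x => ⟪u x, v x⟫) =O[l] fun x => ‖x‖ ^ δ₁ * ‖x‖ ^ δ₂ :=
    (isBigO_of_le l fun x => by simpa using abs_real_inner_le_norm (u x) (v x)).trans
      (hu.norm_left.mul hv.norm_left)
  have hpow : (fun x => ‖x‖ ^ δ₁ * ‖x‖ ^ δ₂) =o[l] fun x => ‖x‖ ^ 2 := by
    refine ((isLittleO_rpow_rpow_atTop hδ).comp_tendsto hl).congr' ?_ ?_
    · filter_upwards [hl.eventually_gt_atTop 0] with x hx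
      exact Real.rpow_add hx δ₁ δ₂
    · exact Eventually.of_forall fun x => Real.rpow_two ‖x‖
  exact hinner.trans_isLittleO hpow

theorem isBigO_sq_norm_sq_norm_sub (hl : Tendsto norm l atTop) (y : E) :
    (fun x => ‖x‖ ^ 2) =O[l] fun x => ‖x - y‖ ^ 2 := by
  have : (fun x => x) =O[l] fun x => x - y := by
    refine IsBigO.of_bound 2 ?_
    filter_upwards [hl.eventually_ge_atTop (2 * ‖y‖)] with x hx
    linarith [norm_le_norm_sub_add x y]
  exact this.norm_norm.pow 2

theorem not_eventually_sq_norm_sub_le_inner [l.NeBot] (hl : Tendsto norm l atTop) {u v : E → F}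
    {δ₁ δ₂ : ℝ} (hu : u =O[l] fun x => ‖x‖ ^ δ₁) (hv : v =O[l] fun x => ‖x‖ ^ δ₂)
    (hδ : δ₁ + δ₂ < 2) (y : E) {c : ℝ} (hc : 0 < c) :
    ¬ ∀ᶠ x in l, c * ‖x - y‖ ^ 2 ≤ ⟪u x, v x⟫ := by
  intro hmono
  have hsub : (fun x => ‖x - y‖ ^ 2) =O[l] fun x => ⟪u x, v x⟫ := by
    refine IsBigO.of_bound c⁻¹ ?_
    filter_upwards [hmono] with x hx
    have h0 : 0 ≤ ‖x - y‖ ^ 2 := by positivity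
    rw [Real.norm_of_nonneg h0, Real.norm_of_nonneg (by nlinarith), ← div_eq_inv_mul,
      le_div_iff₀ hc]
    linarith
  refine isLittleO_irrefl (Eventually.frequently ?_)
    (((isBigO_sq_norm_sq_norm_sub hl y).trans hsub).trans_isLittleO
      (isLittleO_inner_sq_norm hl hu hv hδ))
  filter_upwards [hl.eventually_gt_atTop 0] with x hx
  positivity

end

theorem not_strongMono_of_degree_sum_lt_two_general
    {H : Type*} [NormedAddCommGroup H] [InnerProductSpace ℝ H] [FiniteDimensional ℝ H]
    (C : Set H) (hCcl : IsClosed C)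
    (hCcone : ∀ x ∈ C, ∀ l : ℝ, 0 < l → l • x ∈ C)
    (K : Set H)
    (δ₁ δ₂ : ℝ) (hδ₁ : 0 < δ₁) (hδ₂ : 0 < δ₂)
    (f fInf fbar : H → H) (p : H) (g gInf gbar : H → H) (q : H)
    (hfdec : ∀ x ∈ C, f x = fInf x + fbar x + p)
    (hfhom : ∀ x ∈ C, ∀ l : ℝ, 0 < l → fInf (l • x) = l ^ δ₁ • fInf x)
    (hfc : ContinuousOn fInf C)
    (hfsmall : ∀ ε : ℝ, 0 < ε → ∃ M : ℝ, ∀ x ∈ C, M ≤ ‖x‖ → ‖fbar x‖ ≤ ε * ‖x‖ ^ δ₁)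
    (hgdec : ∀ x ∈ C, g x = gInf x + gbar x + q)
    (hghom : ∀ x ∈ C, ∀ l : ℝ, 0 < l → gInf (l • x) = l ^ δ₂ • gInf x)
    (hgc : ContinuousOn gInf C)
    (hgsmall : ∀ ε : ℝ, 0 < ε → ∃ M : ℝ, ∀ x ∈ C, M ≤ ‖x‖ → ‖gbar x‖ ≤ ε * ‖x‖ ^ δ₂)
    (hunb : ∀ M : ℝ, ∃ x ∈ C, g x ∈ K ∧ M ≤ ‖x‖)
    (hsum : δ₁ + δ₂ < 2) :
    ¬ ∃ c : ℝ, 0 < c ∧ ∀ x ∈ C, ∀ y ∈ C,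
        g x ∈ K → g y ∈ K → c * ‖x - y‖ ^ 2 ≤ ⟪f x - f y, g x - g y⟫ := by
  rintro ⟨c, hc, hmono⟩
  obtain ⟨y, hyC, hyK, -⟩ := hunb 0
  set l := comap norm atTop ⊓ 𝓟 {x | x ∈ C ∧ g x ∈ K}
  have hl : Tendsto norm l atTop := tendsto_comap.mono_left inf_le_left
  have hlC : l ≤ 𝓟 C := inf_le_right.trans (principal_mono.2 fun x hx => hx.1)
  have : l.NeBot := (atTop_basis.comap norm).inf_principal_neBot_iff.2 fun M _ =>
    let ⟨x, hxC, hxK, hxM⟩ := hunb M; ⟨x, hxM, hxC, hxK⟩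
  refine not_eventually_sq_norm_sub_le_inner hl
    (isBigO_sub_const_of_weaklyHomogeneous hCcl hCcone hl hlC hδ₁ hfdec hfhom hfc hfsmall (f y))
    (isBigO_sub_const_of_weaklyHomogeneous hCcl hCcone hl hlC hδ₂ hgdec hghom hgc hgsmall (g y))
    hsum y hc ?_
  exact eventually_inf_principal.2 (Eventually.of_forall fun x hx => hmono x hx.1 y hyC hx.2 hyK)

/-- If `f` and `g` are weakly homogeneous of degrees `δ₁, δ₂ > 0` on a closed convex
cone `C`, `g⁻¹(K)` is unbounded and `δ₁ + δ₂ < 2`, then `f` is not strongly monotone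
with respect to `g` on `K`. -/
theorem not_strongMono_of_degree_sum_lt_two
    {H : Type*} [NormedAddCommGroup H] [InnerProductSpace ℝ H] [FiniteDimensional ℝ H]
    (C : Set H) (hCcl : IsClosed C) (hCconv : Convex ℝ C)
    (hCcone : ∀ x ∈ C, ∀ l : ℝ, 0 < l → l • x ∈ C)
    (K : Set H) (hKne : K.Nonempty) (hKcl : IsClosed K) (hKconv : Convex ℝ K)
    (δ₁ δ₂ : ℝ) (hδ₁ : 0 < δ₁) (hδ₂ : 0 < δ₂)
    (f fInf fbar : H → H) (p : H) (g gInf gbar : H → H) (q : H)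
    (hfdec : ∀ x ∈ C, f x = fInf x + fbar x + p)
    (hfhom : ∀ x ∈ C, ∀ l : ℝ, 0 < l → fInf (l • x) = l ^ δ₁ • fInf x)
    (hfc : ContinuousOn fInf C)
    (hfsmall : ∀ ε : ℝ, 0 < ε → ∃ M : ℝ, ∀ x ∈ C, M ≤ ‖x‖ → ‖fbar x‖ ≤ ε * ‖x‖ ^ δ₁)
    (hgdec : ∀ x ∈ C, g x = gInf x + gbar x + q)
    (hghom : ∀ x ∈ C, ∀ l : ℝ, 0 < l → gInf (l • x) = l ^ δ₂ • gInf x)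
    (hgc : ContinuousOn gInf C)
    (hgsmall : ∀ ε : ℝ, 0 < ε → ∃ M : ℝ, ∀ x ∈ C, M ≤ ‖x‖ → ‖gbar x‖ ≤ ε * ‖x‖ ^ δ₂)
    (hunb : ∀ M : ℝ, ∃ x ∈ C, g x ∈ K ∧ M ≤ ‖x‖)
    (hsum : δ₁ + δ₂ < 2) :
    ¬ ∃ c : ℝ, 0 < c ∧ ∀ x ∈ C, ∀ y ∈ C,
        g x ∈ K → g y ∈ K → c * ‖x - y‖ ^ 2 ≤ ⟪f x - f y, g x - g y⟫ :=
  not_strongMono_of_degree_sum_lt_two_general C hCcl hCcone K δ₁ δ₂ hδ₁ hδ₂ f fInf fbar p g gInf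
    gbar q hfdec hfhom hfc hfsmall hgdec hghom hgc hgsmall hunb hsum
end

section
/- Let K be a nonempty closed convex set in H with 0 ∈ K, and let K^∞ be its recession cone. Suppose g⁻¹(K) contains a segment from 0. If f : C → H and g : C → H are positively homogeneous of degrees γ ≥ 1 and β ≥ 1 with γ + β > 2 on a cone C containing g⁻¹(K), g(0) = 0 ∈ K, and f(0) = 0, then f is not strongly monotone with respect to g on K. -/
open RealInnerProductSpace

/-- If `f, g` are positively homogeneous of degrees `γ, β ≥ 1` with `γ + β > 2` on a
cone `C ⊇ g⁻¹(K)`, `g(0) = 0 ∈ K`, `f(0) = 0`, and `g⁻¹(K)` contains a segment from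
`0`, then `f` is not strongly monotone with respect to `g` on `K`. -/
theorem not_strongMono_of_homogeneous_degrees
    {H : Type*} [NormedAddCommGroup H] [InnerProductSpace ℝ H] [FiniteDimensional ℝ H]
    (K : Set H) (hKcl : IsClosed K) (hKconv : Convex ℝ K) (h0K : (0 : H) ∈ K)
    (C : Set H) (hCcone : ∀ x ∈ C, ∀ l : ℝ, 0 < l → l • x ∈ C)
    (γ β : ℝ) (hγ : 1 ≤ γ) (hβ : 1 ≤ β) (hsum : 2 < γ + β)
    (f g : H → H)
    (hginvC : ∀ x : H, g x ∈ K → x ∈ C)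
    (hfhom : ∀ x ∈ C, ∀ l : ℝ, 0 < l → f (l • x) = l ^ γ • f x)
    (hghom : ∀ x ∈ C, ∀ l : ℝ, 0 < l → g (l • x) = l ^ β • g x)
    (hg0 : g 0 = 0) (hf0 : f 0 = 0)
    (hseg : ∃ x₀ ∈ C, x₀ ≠ 0 ∧ ∃ t₀ : ℝ, 0 < t₀ ∧
      ∀ t : ℝ, 0 < t → t ≤ t₀ → g (t • x₀) ∈ K) :
    ¬ ∃ c : ℝ, 0 < c ∧ ∀ x y : H,
        g x ∈ K → g y ∈ K → c * ‖x - y‖ ^ 2 ≤ ⟪f x - f y, g x - g y⟫ := by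
  rintro ⟨c, hc, hmono⟩
  obtain ⟨x₀, hx₀C, hx₀ne, t₀, ht₀, hK⟩ := hseg
  set I : ℝ := ⟪f x₀, g x₀⟫ with hI
  set ε : ℝ := γ + β - 2 with hε
  have hεpos : 0 < ε := by simp [hε]; linarith
  have hx₀pos : 0 < ‖x₀‖ ^ 2 := pow_pos (norm_pos_iff.mpr hx₀ne) 2
  have key : ∀ t : ℝ, 0 < t → t ≤ t₀ → c * ‖x₀‖ ^ 2 ≤ t ^ ε * I := by
    intro t ht htl
    have h1 := hmono (t • x₀) 0 (hK t ht htl) (by rwa [hg0])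
    rw [hf0, hg0, sub_zero, sub_zero, sub_zero, hfhom x₀ hx₀C t ht,
      hghom x₀ hx₀C t ht, real_inner_smul_left, real_inner_smul_right,
      norm_smul, Real.norm_eq_abs, abs_of_pos ht] at h1
    have h2 : c * (t * ‖x₀‖) ^ 2 = t ^ (2:ℝ) * (c * ‖x₀‖ ^ 2) := by
      rw [Real.rpow_two]; ring
    have h3 : t ^ γ * (t ^ β * I) = t ^ (2:ℝ) * (t ^ ε * I) := by
      rw [← mul_assoc, ← mul_assoc, ← Real.rpow_add ht, ← Real.rpow_add ht]
      have hex : γ + β = 2 + ε := by rw [hε]; ring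
      rw [hex]
    rw [h2, h3] at h1
    exact le_of_mul_le_mul_left h1 (Real.rpow_pos_of_pos ht 2)
  -- take the limit t → 0+
  have hlim : Filter.Tendsto (fun t : ℝ => t ^ ε * I) (nhdsWithin 0 (Set.Ioi 0))
      (nhds 0) := by
    have h0 : (0:ℝ) ^ ε = 0 := Real.zero_rpow hεpos.ne'
    have := ((Real.continuousAt_rpow_const 0 ε (Or.inr hεpos.le)).continuousWithinAt
      (s := Set.Ioi 0)).tendsto.mul_const I
    simpa [h0] using this
  have hev : ∀ᶠ t in nhdsWithin (0:ℝ) (Set.Ioi 0), t ^ ε * I < c * ‖x₀‖ ^ 2 :=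
    hlim.eventually_lt_const (by positivity)
  have hev2 : ∀ᶠ t in nhdsWithin (0:ℝ) (Set.Ioi 0), t ≤ t₀ ∧ 0 < t := by
    filter_upwards [Ioc_mem_nhdsGT_of_mem ⟨le_refl 0, ht₀⟩] with t ht
    exact ⟨ht.2, ht.1⟩
  obtain ⟨t, h1, h2, h3⟩ := (hev.and hev2).exists
  exact absurd (key t h3 h2) (not_le.2 h1)
end

section
/- Let f : ℝⁿ₊ → ℝⁿ and g : ℝⁿ → ℝⁿ be continuous with g⁻¹(ℝⁿ₊) ⊆ ℝⁿ₊. Suppose f has the P-property with respect to g on ℝⁿ₊: for all x ≠ y with g(x), g(y) ∈ ℝⁿ₊, max_{1≤i≤n} [fᵢ(x) − fᵢ(y)][gᵢ(x) − gᵢ(y)] > 0. Then the complementarity problem — find x with g(x) ≥ 0, f(x) ≥ 0, ⟨f(x), g(x)⟩ = 0 — has at most one solution. -/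
/-- If `f` has the P-property with respect to `g` on `ℝⁿ₊` and `g⁻¹(ℝⁿ₊) ⊆ ℝⁿ₊`, then
the generalized complementarity problem `g(x) ≥ 0, f(x) ≥ 0, ⟨f(x), g(x)⟩ = 0` has at
most one solution. -/
theorem gcp_at_most_one_solution_of_P_property
    {n : ℕ} (f g : (Fin n → ℝ) → (Fin n → ℝ))
    (hf : Continuous f) (hg : Continuous g)
    (hginv : ∀ x : Fin n → ℝ, (∀ i, 0 ≤ g x i) → ∀ i, 0 ≤ x i)
    (hP : ∀ x y : Fin n → ℝ, (∀ i, 0 ≤ g x i) → (∀ i, 0 ≤ g y i) → x ≠ y →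
      ∃ i, 0 < (f x i - f y i) * (g x i - g y i)) :
    ∀ x y : Fin n → ℝ,
      ((∀ i, 0 ≤ g x i) ∧ (∀ i, 0 ≤ f x i) ∧ ∑ i, f x i * g x i = 0) →
      ((∀ i, 0 ≤ g y i) ∧ (∀ i, 0 ≤ f y i) ∧ ∑ i, f y i * g y i = 0) →
      x = y := by
  rintro x y ⟨hgx, hfx, hsx⟩ ⟨hgy, hfy, hsy⟩
  by_contra hne
  obtain ⟨i, hi⟩ := hP x y hgx hgy hne
  have hx0 : ∀ i ∈ Finset.univ, f x i * g x i = 0 :=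
    (Finset.sum_eq_zero_iff_of_nonneg (fun i _ => mul_nonneg (hfx i) (hgx i))).1 hsx
  have hy0 : ∀ i ∈ Finset.univ, f y i * g y i = 0 :=
    (Finset.sum_eq_zero_iff_of_nonneg (fun i _ => mul_nonneg (hfy i) (hgy i))).1 hsy
  have h1 := hx0 i (Finset.mem_univ i)
  have h2 := hy0 i (Finset.mem_univ i)
  have h3 : (f x i - f y i) * (g x i - g y i) ≤ 0 := by
    have := mul_nonneg (hfx i) (hgy i)
    have := mul_nonneg (hfy i) (hgx i)
    nlinarith
  linarith
end
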